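/- Distinct point-hyperplane anti-flags A_1, A_2 of PG(n-1,F) are 3-adjacent if and only if for any distinct anti-flags A_1', A_2' belonging to ({A_1, A_2}^{~_2})^{~_2}, one has ({A_1', A_2'}^{~_2})^{~_2} = ({A_1, A_2}^{~_2})^{~_2}. -/
import Mathlib


/-- A point-hyperplane anti-flag of `PG(n-1,F)`: a pair `(p, H)` where `p` is a point
(1-dimensional subspace of `F^n`), `H` is a hyperplane ((n-1)-dimensional subspace),
and `p` is not contained in `H`. -/
structure AntiFlag (F : Type*) [Field F] (n : ℕ) where
  pt : Submodule F (Fin n → F)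
  hyp : Submodule F (Fin n → F)
  pt_rank : Module.finrank F pt = 1
  hyp_rank : Module.finrank F hyp = n - 1
  not_incident : ¬ pt ≤ hyp

variable {F : Type*} [Field F] {n : ℕ}

/-- `A ~₁ B` : for some `j`, `p_j ⊆ H_{3-j}` and `p_{3-j} ⊄ H_j`. -/
def adj1 (A B : AntiFlag F n) : Prop :=
  A ≠ B ∧ ((A.pt ≤ B.hyp ∧ ¬ B.pt ≤ A.hyp) ∨ (B.pt ≤ A.hyp ∧ ¬ A.pt ≤ B.hyp))

/-- `A ~₂ B` : `p_1 ⊆ H_2` and `p_2 ⊆ H_1`. -/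
def adj2 (A B : AntiFlag F n) : Prop :=
  A ≠ B ∧ A.pt ≤ B.hyp ∧ B.pt ≤ A.hyp

/-- `A ~₃ B` : `p_1 = p_2` or `H_1 = H_2`. -/
def adj3 (A B : AntiFlag F n) : Prop :=
  A ≠ B ∧ (A.pt = B.pt ∨ A.hyp = B.hyp)

/-- `A ~₄ B` : `p_1 ≠ p_2`, `H_1 ≠ H_2`, `p_1 ⊄ H_2` and `p_2 ⊄ H_1`. -/
def adj4 (A B : AntiFlag F n) : Prop :=
  A ≠ B ∧ A.pt ≠ B.pt ∧ A.hyp ≠ B.hyp ∧ ¬ A.pt ≤ B.hyp ∧ ¬ B.pt ≤ A.hyp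

/-- `𝒳^{~ᵢ}` : the set of anti-flags `i`-adjacent to every anti-flag of `𝒳`. -/
def perpSet (adj : AntiFlag F n → AntiFlag F n → Prop) (X : Set (AntiFlag F n)) :
    Set (AntiFlag F n) := {B | ∀ A ∈ X, adj A B}

/- ### Auxiliary material -/

open Module Submodule

lemma AntiFlag.ext' {A B : AntiFlag F n} (h1 : A.pt = B.pt) (h2 : A.hyp = B.hyp) : A = B := by
  cases A; cases B; simp_all

lemma adj2_symm {A B : AntiFlag F n} (h : adj2 A B) : adj2 B A :=
  ⟨h.1.symm, h.2.2, h.2.1⟩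

/-- The generic shape of a perp set of a pair. -/
def Saux (L W : Submodule F (Fin n → F)) : Set (AntiFlag F n) :=
  {B | B.pt ≤ W ∧ L ≤ B.hyp}

lemma perp_pair (A1 A2 : AntiFlag F n) :
    perpSet adj2 {A1, A2} = Saux (A1.pt ⊔ A2.pt) (A1.hyp ⊓ A2.hyp) := by
  ext B
  constructor
  · intro hB
    have h1 := hB A1 (by simp)
    have h2 := hB A2 (by simp)
    exact ⟨le_inf h1.2.2 h2.2.2, sup_le h1.2.1 h2.2.1⟩
  · rintro ⟨hBpt, hBhyp⟩ A hA
    have hApt : A.pt ≤ A1.pt ⊔ A2.pt ∧ A1.hyp ⊓ A2.hyp ≤ A.hyp := by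
      rcases hA with h | h <;> subst h
      · exact ⟨le_sup_left, inf_le_left⟩
      · exact ⟨le_sup_right, inf_le_right⟩
    refine ⟨?_, hApt.1.trans hBhyp, hBpt.trans hApt.2⟩
    intro h
    have hfin : B.pt ≤ A.hyp := hBpt.trans hApt.2
    rw [h] at hfin
    exact B.not_incident hfin

lemma mem_perp_Saux {L W : Submodule F (Fin n → F)} {C : AntiFlag F n}
    (h1 : C.pt ≤ L) (h2 : W ≤ C.hyp) : C ∈ perpSet adj2 (Saux L W) := by
  intro B hB
  refine ⟨?_, hB.1.trans h2, h1.trans hB.2⟩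
  intro h
  have hfin : B.pt ≤ C.hyp := hB.1.trans h2
  rw [h] at hfin
  exact C.not_incident hfin

lemma self_mem_double_perp {A1 A2 : AntiFlag F n} :
    A1 ∈ perpSet adj2 (perpSet adj2 {A1, A2}) ∧
    A2 ∈ perpSet adj2 (perpSet adj2 {A1, A2}) := by
  constructor <;> intro B hB
  · exact adj2_symm (hB A1 (by simp))
  · exact adj2_symm (hB A2 (by simp))

lemma sep (U : Submodule F (Fin n → F)) {x : Fin n → F} (hx : x ∉ U) :
    ∃ φ : Module.Dual F (Fin n → F), (∀ u ∈ U, φ u = 0) ∧ φ x ≠ 0 := by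
  obtain ⟨f, hf, hmap⟩ := U.exists_dual_map_eq_bot_of_notMem hx inferInstance
  refine ⟨f, fun u hu => ?_, hf⟩
  have : f u ∈ U.map f := ⟨u, hu, rfl⟩
  rw [hmap] at this
  simpa using this

lemma finrank_ker {φ : Module.Dual F (Fin n → F)} (hφ : φ ≠ 0) :
    finrank F (LinearMap.ker φ) = n - 1 := by
  have h := LinearMap.finrank_range_add_finrank_ker φ
  rw [Module.finrank_fin_fun] at h
  have h1 : finrank F (LinearMap.range φ) ≤ 1 := by
    simpa using (LinearMap.range φ).finrank_le
  have h2 : finrank F (LinearMap.range φ) ≠ 0 := fun h0 =>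
    hφ (LinearMap.range_eq_bot.mp (Submodule.finrank_eq_zero.mp h0))
  omega

/-- Build an anti-flag from a vector `w` and a functional `φ` with `φ w ≠ 0`. -/
def mkAF (w : Fin n → F) (φ : Module.Dual F (Fin n → F)) (hw : φ w ≠ 0) : AntiFlag F n where
  pt := Submodule.span F {w}
  hyp := LinearMap.ker φ
  pt_rank := finrank_span_singleton (fun h => hw (by rw [h]; exact map_zero φ))
  hyp_rank := finrank_ker (fun h => hw (by rw [h]; rfl))
  not_incident := fun hle => hw (hle (Submodule.mem_span_singleton_self w))

lemma rank1_gen {p : Submodule F (Fin n → F)} (hp : finrank F p = 1) :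
    ∃ v : Fin n → F, v ≠ 0 ∧ p = Submodule.span F {v} := by
  have hbot : p ≠ ⊥ := by intro h; rw [h] at hp; simp at hp
  obtain ⟨v, hv, hv0⟩ := Submodule.exists_mem_ne_zero_of_ne_bot hbot
  refine ⟨v, hv0, ?_⟩
  have h1 : Submodule.span F {v} ≤ p := by
    rw [Submodule.span_singleton_le_iff_mem]; exact hv
  exact (Submodule.eq_of_le_of_finrank_le h1
    (by rw [finrank_span_singleton hv0, hp])).symm

lemma sup_hyp_eq_top {K1 K2 : Submodule F (Fin n → F)} (hn : 1 ≤ n)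
    (h1 : finrank F K1 = n - 1) (h2 : finrank F K2 = n - 1) (hKne : K1 ≠ K2) :
    K1 ⊔ K2 = ⊤ := by
  have hle : finrank F ↥(K1 ⊔ K2) ≤ n := by
    simpa [Module.finrank_fin_fun] using (K1 ⊔ K2).finrank_le
  by_cases hc : finrank F ↥(K1 ⊔ K2) ≤ n - 1
  · have e1 : K1 = K1 ⊔ K2 := Submodule.eq_of_le_of_finrank_le le_sup_left (by omega)
    have hK2 : K2 ≤ K1 := by rw [e1]; exact le_sup_right
    exact absurd (Submodule.eq_of_le_of_finrank_le hK2 (by omega)).symm hKne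
  · apply Submodule.eq_top_of_finrank_eq
    rw [Module.finrank_fin_fun]
    omega

lemma inf_hyp_finrank {K1 K2 : Submodule F (Fin n → F)} (hn : 1 ≤ n)
    (h1 : finrank F K1 = n - 1) (h2 : finrank F K2 = n - 1) (hKne : K1 ≠ K2) :
    finrank F ↥(K1 ⊓ K2) = n - 2 := by
  have h := Submodule.finrank_sup_add_finrank_inf_eq K1 K2
  rw [sup_hyp_eq_top hn h1 h2 hKne, finrank_top, Module.finrank_fin_fun, h1, h2] at h
  omega

lemma sup_pt_finrank {p1 p2 : Submodule F (Fin n → F)}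
    (h1 : finrank F p1 = 1) (h2 : finrank F p2 = 1) (hne : p1 ≠ p2) :
    finrank F ↥(p1 ⊔ p2) = 2 := by
  have h := Submodule.finrank_sup_add_finrank_inf_eq p1 p2
  have hle : finrank F ↥(p1 ⊓ p2) ≤ 1 := by
    rw [← h1]; exact Submodule.finrank_mono inf_le_left
  have hne0 : finrank F ↥(p1 ⊓ p2) = 0 := by
    by_contra hc
    have e1 : p1 ⊓ p2 = p1 := Submodule.eq_of_le_of_finrank_le inf_le_left (by omega)
    have hp12 : p1 ≤ p2 := by rw [← e1]; exact inf_le_right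
    exact hne (Submodule.eq_of_le_of_finrank_le hp12 (by omega))
  rw [h1, h2, hne0] at h
  omega

/-- Forcing lemma: any member of the perp of `Saux p W` has point exactly `p`
and hyperplane containing `W`. -/
lemma forcing_pt (hn : 3 ≤ n) {p W : Submodule F (Fin n → F)}
    (hp : finrank F p = 1) (hW : finrank F W = n - 2) (hpW : ¬ p ≤ W)
    {C : AntiFlag F n} (hC : C ∈ perpSet adj2 (Saux p W)) :
    C.pt = p ∧ W ≤ C.hyp := by
  -- any nonzero element of `W` is not in `p`
  have hWnotp : ∀ w ∈ W, w ≠ 0 → w ∉ p := by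
    intro w hw hw0 hwp
    have hsp : Submodule.span F {w} ≤ p := by
      rw [Submodule.span_singleton_le_iff_mem]; exact hwp
    have : Submodule.span F {w} = p := Submodule.eq_of_le_of_finrank_le hsp
      (by rw [finrank_span_singleton hw0, hp])
    exact hpW (this ▸ (by rw [Submodule.span_singleton_le_iff_mem]; exact hw))
  have hWhyp : W ≤ C.hyp := by
    intro w hw
    by_cases hw0 : w = 0
    · simp [hw0]
    obtain ⟨φ, hφ1, hφ2⟩ := sep p (hWnotp w hw hw0)
    have hB := hC (mkAF w φ hφ2) ⟨by
        simpa [mkAF, Submodule.span_singleton_le_iff_mem] using hw,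
      fun u hu => hφ1 u hu⟩
    exact hB.2.1 (Submodule.mem_span_singleton_self w)
  refine ⟨?_, hWhyp⟩
  -- C.pt ≤ p
  have hle : C.pt ≤ p := by
    intro v hv
    by_contra hvp
    -- find φ vanishing on p, nonzero at v, nonzero somewhere on W
    obtain ⟨w0, hw0W, hw00⟩ := Submodule.exists_mem_ne_zero_of_ne_bot
      (show W ≠ ⊥ by intro h; rw [h] at hW; simp at hW; omega)
    obtain ⟨ψ1, hψ1p, hψ1v⟩ := sep p hvp
    obtain ⟨ψ2, hψ2p, hψ2w⟩ := sep p (hWnotp w0 hw0W hw00)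
    obtain ⟨φ, hφp, hφv, w, hwW, hφw⟩ :
        ∃ φ : Module.Dual F (Fin n → F),
          (∀ u ∈ p, φ u = 0) ∧ φ v ≠ 0 ∧ ∃ w ∈ W, φ w ≠ 0 := by
      by_cases h1 : ∃ w ∈ W, ψ1 w ≠ 0
      · obtain ⟨w, hw, hw'⟩ := h1
        exact ⟨ψ1, hψ1p, hψ1v, w, hw, hw'⟩
      push_neg at h1
      by_cases h2 : ψ2 v ≠ 0
      · exact ⟨ψ2, hψ2p, h2, w0, hw0W, hψ2w⟩
      push_neg at h2
      refine ⟨ψ1 + ψ2, fun u hu => by simp [hψ1p u hu, hψ2p u hu], ?_, w0, hw0W, ?_⟩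
      · simp [h2, hψ1v]
      · simp [h1 w0 hw0W, hψ2w]
    have hB := hC (mkAF w φ hφw) ⟨by
        simpa [mkAF, Submodule.span_singleton_le_iff_mem] using hwW,
      fun u hu => hφp u hu⟩
    exact hφv (hB.2.2 hv)
  exact Submodule.eq_of_le_of_finrank_le hle (by rw [hp, C.pt_rank])

/-- Dual forcing lemma: any member of the perp of `Saux L H` has point inside `L`
and hyperplane exactly `H`. -/
lemma forcing_hyp (hn : 3 ≤ n) {L H : Submodule F (Fin n → F)}
    (hL : finrank F L = 2) (hH : finrank F H = n - 1) (hLH : ¬ L ≤ H)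
    {C : AntiFlag F n} (hC : C ∈ perpSet adj2 (Saux L H)) :
    C.pt ≤ L ∧ C.hyp = H := by
  have hHL : ¬ H ≤ L := by
    intro h
    have h1 : n - 1 ≤ 2 := by rw [← hH, ← hL]; exact Submodule.finrank_mono h
    have h2 : H = L := Submodule.eq_of_le_of_finrank_le h (by omega)
    exact hLH (le_of_eq h2.symm)
  constructor
  · -- C.pt ≤ L
    intro v hv
    by_contra hvL
    obtain ⟨φ, hφL, hφv⟩ := sep L hvL
    have hker : ¬ H ≤ LinearMap.ker φ := by
      intro h
      have hφ0 : φ ≠ 0 := fun h0 => hφv (by rw [h0]; rfl)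
      have : H = LinearMap.ker φ := Submodule.eq_of_le_of_finrank_le h
        (by rw [finrank_ker hφ0, hH])
      exact hLH (fun x hx => this ▸ (LinearMap.mem_ker.mpr (hφL x hx)))
    obtain ⟨w, hwH, hwk⟩ := SetLike.not_le_iff_exists.mp hker
    have hφw : φ w ≠ 0 := fun h => hwk (LinearMap.mem_ker.mpr h)
    have hB := hC (mkAF w φ hφw) ⟨by
        simpa [mkAF, Submodule.span_singleton_le_iff_mem] using hwH,
      fun u hu => hφL u hu⟩
    exact hφv (hB.2.2 hv)
  · -- C.hyp = H
    have key : ∀ w ∈ H, w ∉ L → w ∈ C.hyp := by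
      intro w hwH hwL
      obtain ⟨φ, hφL, hφw⟩ := sep L hwL
      have hB := hC (mkAF w φ hφw) ⟨by
          simpa [mkAF, Submodule.span_singleton_le_iff_mem] using hwH,
        fun u hu => hφL u hu⟩
      exact hB.2.1 (Submodule.mem_span_singleton_self w)
    obtain ⟨w0, hw0H, hw0L⟩ := SetLike.not_le_iff_exists.mp hHL
    have hHC : H ≤ C.hyp := by
      intro h hh
      by_cases hL' : h ∈ L
      · have h1 : h + w0 ∈ H := H.add_mem hh hw0H
        have h2 : h + w0 ∉ L := fun hc => hw0L (by
          have := L.sub_mem hc hL'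
          simpa using this)
        have h3 : h + w0 ∈ C.hyp := key _ h1 h2
        have h4 : w0 ∈ C.hyp := key _ hw0H hw0L
        have := C.hyp.sub_mem h3 h4
        simpa using this
      · exact key _ hh hL'
    exact (Submodule.eq_of_le_of_finrank_le hHC (by rw [C.hyp_rank, hH])).symm

theorem stmt1 (hn : 3 ≤ n) (A1 A2 : AntiFlag F n) (hne : A1 ≠ A2) :
    adj3 A1 A2 ↔
      ∀ A1' A2' : AntiFlag F n,
        A1' ∈ perpSet adj2 (perpSet adj2 {A1, A2}) →
        A2' ∈ perpSet adj2 (perpSet adj2 {A1, A2}) → A1' ≠ A2' →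
        perpSet adj2 (perpSet adj2 {A1', A2'}) = perpSet adj2 (perpSet adj2 {A1, A2}) := by
  constructor
  · rintro ⟨-, hcase⟩ A1' A2' hm1 hm2 hne'
    rcases hcase with hp | hH
    · -- same point
      have hH12 : A1.hyp ≠ A2.hyp := fun h => hne (AntiFlag.ext' hp h)
      have hsup : A1.pt ⊔ A2.pt = A1.pt := by rw [← hp, sup_idem]
      have hWrank : finrank F ↥(A1.hyp ⊓ A2.hyp) = n - 2 :=
        inf_hyp_finrank (by omega) A1.hyp_rank A2.hyp_rank hH12
      have hpW : ¬ A1.pt ≤ A1.hyp ⊓ A2.hyp := fun h => A1.not_incident (h.trans inf_le_left)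
      rw [perp_pair, hsup] at hm1 hm2
      obtain ⟨e1, w1⟩ := forcing_pt hn A1.pt_rank hWrank hpW hm1
      obtain ⟨e2, w2⟩ := forcing_pt hn A1.pt_rank hWrank hpW hm2
      have hyne : A1'.hyp ≠ A2'.hyp := fun h => hne' (AntiFlag.ext' (e1.trans e2.symm) h)
      have hW' : A1'.hyp ⊓ A2'.hyp = A1.hyp ⊓ A2.hyp := by
        refine (Submodule.eq_of_le_of_finrank_le (le_inf w1 w2) ?_).symm
        rw [hWrank, inf_hyp_finrank (by omega) A1'.hyp_rank A2'.hyp_rank hyne]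
      rw [perp_pair A1' A2', perp_pair A1 A2, hsup, e1, e2, sup_idem, hW']
    · -- same hyperplane
      have hp12 : A1.pt ≠ A2.pt := fun h => hne (AntiFlag.ext' h hH)
      have hinf : A1.hyp ⊓ A2.hyp = A1.hyp := by rw [← hH, inf_idem]
      have hLrank : finrank F ↥(A1.pt ⊔ A2.pt) = 2 :=
        sup_pt_finrank A1.pt_rank A2.pt_rank hp12
      have hLH : ¬ A1.pt ⊔ A2.pt ≤ A1.hyp := fun h => A1.not_incident (le_sup_left.trans h)
      rw [perp_pair, hinf] at hm1 hm2
      obtain ⟨e1, w1⟩ := forcing_hyp hn hLrank A1.hyp_rank hLH hm1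
      obtain ⟨e2, w2⟩ := forcing_hyp hn hLrank A1.hyp_rank hLH hm2
      have hptne : A1'.pt ≠ A2'.pt := fun h => hne' (AntiFlag.ext' h (w1.trans w2.symm))
      have hL' : A1'.pt ⊔ A2'.pt = A1.pt ⊔ A2.pt := by
        refine Submodule.eq_of_le_of_finrank_le (sup_le e1 e2) ?_
        rw [hLrank, sup_pt_finrank A1'.pt_rank A2'.pt_rank hptne]
      rw [perp_pair A1' A2', perp_pair A1 A2, hL', w1, w2, inf_idem, hinf]
  · intro hRHS
    by_contra hn3
    simp only [adj3, not_and, not_or] at hn3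
    obtain ⟨hpt12, hH12⟩ := hn3 hne
    have hWrank : finrank F ↥(A1.hyp ⊓ A2.hyp) = n - 2 :=
      inf_hyp_finrank (by omega) A1.hyp_rank A2.hyp_rank hH12
    obtain ⟨v1, hv10, hv1span⟩ := rank1_gen A1.pt_rank
    have hv1mem : v1 ∈ A1.pt := by rw [hv1span]; exact Submodule.mem_span_singleton_self v1
    have hv1W : v1 ∉ A1.hyp ⊓ A2.hyp := by
      intro h
      exact A1.not_incident (by
        rw [hv1span, Submodule.span_singleton_le_iff_mem]
        exact (inf_le_left : A1.hyp ⊓ A2.hyp ≤ A1.hyp) h)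
    obtain ⟨ψ, hψW, hψv1⟩ := sep _ hv1W
    -- find `u` outside `(A1.hyp ⊓ A2.hyp) ⊔ span {v1}`
    have hsubrank : finrank F ↥((A1.hyp ⊓ A2.hyp) ⊔ Submodule.span F {v1}) < n := by
      have h := Submodule.finrank_sup_add_finrank_inf_eq (A1.hyp ⊓ A2.hyp)
        (Submodule.span F {v1})
      rw [hWrank, finrank_span_singleton hv10] at h
      omega
    have hne_top : (A1.hyp ⊓ A2.hyp) ⊔ Submodule.span F {v1} ≠ ⊤ := by
      intro h
      rw [h, finrank_top, Module.finrank_fin_fun] at hsubrank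
      omega
    obtain ⟨u, -, hu⟩ := SetLike.exists_of_lt
      (lt_top_iff_ne_top.mpr hne_top :
        (A1.hyp ⊓ A2.hyp) ⊔ Submodule.span F {v1} < (⊤ : Submodule F (Fin n → F)))
    obtain ⟨b, hbWv, hbu⟩ := sep _ hu
    have hbW : ∀ w ∈ A1.hyp ⊓ A2.hyp, b w = 0 := fun w hw => hbWv w ((le_sup_left : A1.hyp ⊓ A2.hyp ≤ _ ⊔ Submodule.span F {v1}) hw)
    have hbv1 : b v1 = 0 := hbWv v1 ((le_sup_right : Submodule.span F {v1} ≤ (A1.hyp ⊓ A2.hyp) ⊔ _) (Submodule.mem_span_singleton_self v1))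
    have hφ2v1 : (ψ + b) v1 ≠ 0 := by
      simpa [hbv1] using hψv1
    have hKne : LinearMap.ker ψ ≠ LinearMap.ker (ψ + b) := by
      intro h
      have hφ1x : ψ (u - (ψ u / ψ v1) • v1) = 0 := by
        simp [map_sub, map_smul, div_mul_cancel₀ _ hψv1]
      have hmem2 : u - (ψ u / ψ v1) • v1 ∈ LinearMap.ker (ψ + b) := by
        rw [← h]; exact LinearMap.mem_ker.mpr hφ1x
      have hval : (ψ + b) (u - (ψ u / ψ v1) • v1) = b u := by
        simp [map_sub, map_smul, hbv1, hφ1x]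
        simp [map_sub, map_smul, div_mul_cancel₀ _ hψv1]
      rw [LinearMap.mem_ker, hval] at hmem2
      exact hbu hmem2
    have hψ0 : ψ ≠ 0 := fun h0 => hψv1 (by rw [h0]; rfl)
    have hφ20 : ψ + b ≠ 0 := fun h0 => hφ2v1 (by rw [h0]; rfl)
    set C1 : AntiFlag F n := ⟨A1.pt, LinearMap.ker ψ, A1.pt_rank, finrank_ker hψ0,
      fun h => hψv1 (LinearMap.mem_ker.mp (h hv1mem))⟩ with hC1
    set C2 : AntiFlag F n := ⟨A1.pt, LinearMap.ker (ψ + b), A1.pt_rank, finrank_ker hφ20,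
      fun h => hφ2v1 (LinearMap.mem_ker.mp (h hv1mem))⟩ with hC2
    have hC12 : C1 ≠ C2 := by
      intro h
      exact hKne (congrArg AntiFlag.hyp h)
    have hm1 : C1 ∈ perpSet adj2 (perpSet adj2 {A1, A2}) := by
      rw [perp_pair]
      exact mem_perp_Saux le_sup_left (fun w hw => LinearMap.mem_ker.mpr (hψW w hw))
    have hm2 : C2 ∈ perpSet adj2 (perpSet adj2 {A1, A2}) := by
      rw [perp_pair]
      refine mem_perp_Saux le_sup_left (fun w hw => LinearMap.mem_ker.mpr ?_)
      simp [hψW w hw, hbW w hw]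
    have heq := hRHS C1 C2 hm1 hm2 hC12
    have hA2mem : A2 ∈ perpSet adj2 (perpSet adj2 {C1, C2}) := by
      rw [heq]; exact self_mem_double_perp.2
    rw [perp_pair C1 C2] at hA2mem
    have hsup12 : C1.pt ⊔ C2.pt = A1.pt := by
      show A1.pt ⊔ A1.pt = A1.pt
      exact sup_idem _
    have hKrank : finrank F ↥(C1.hyp ⊓ C2.hyp) = n - 2 :=
      inf_hyp_finrank (by omega) (finrank_ker hψ0) (finrank_ker hφ20) hKne
    have hpK : ¬ A1.pt ≤ C1.hyp ⊓ C2.hyp := by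
      intro h
      exact hψv1 (LinearMap.mem_ker.mp ((inf_le_left : C1.hyp ⊓ C2.hyp ≤ C1.hyp) (h hv1mem)))
    rw [hsup12] at hA2mem
    have := forcing_pt hn A1.pt_rank hKrank hpK hA2mem
    exact hpt12 this.1.symm
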